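/- arXiv:math/0409249 — 2 statements merged into one kernel-verified Lean document; each statement's English description precedes it below -/
import Mathlib

section
/- Second Lyapunov functional for the fourth-order equation: let L > 0 and let u : ℝ × [0, ∞) → ℝ be a smooth function, L-periodic in x, with u > 0, solving u_t + ( u (log u)_{xx} )_{xx} = 0. Then for every t ≥ 0, d/dt ∫₀ᴸ ( u(x,t) − log u(x,t) ) dx = − ∫₀ᴸ ( (log u)_{xx}(x,t) )² dx; in particular t ↦ ∫₀ᴸ ( u − log u ) dx is non-increasing. -/
open intervalIntegral Set MeasureTheory


lemma periodic_deriv'' {f : ℝ → ℝ} {c : ℝ} (h : Function.Periodic f c) :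
    Function.Periodic (deriv f) c := by
  intro x
  have hf : (fun y => f (y + c)) = f := funext h
  calc deriv f (x + c) = deriv (fun y => f (y + c)) x := (deriv_comp_add_const f c x).symm
    _ = deriv f x := by rw [hf]

lemma dlss_spatial (L : ℝ) (hL : 0 < L) (f : ℝ → ℝ) (hf : ContDiff ℝ (⊤ : ℕ∞) f)
    (hpos : ∀ x, 0 < f x) (hper : ∀ x, f (x + L) = f x) :
    ∫ x in (0:ℝ)..L,
        (1 - (f x)⁻¹) *
          iteratedDeriv 2 (fun y => f y * iteratedDeriv 2 (fun z => Real.log (f z)) y) x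
      = ∫ x in (0:ℝ)..L, (iteratedDeriv 2 (fun z => Real.log (f z)) x) ^ 2 := by
  have hne : ∀ x, f x ≠ 0 := fun x => (hpos x).ne'
  have hfd : ∀ x, HasDerivAt f (deriv f x) x :=
    fun x => (hf.differentiable (by simp) x).hasDerivAt
  have hf' : ContDiff ℝ (⊤ : ℕ∞) (deriv f) := (contDiff_infty_iff_deriv.mp hf).2
  have hf'd : ∀ x, HasDerivAt (deriv f) (deriv (deriv f) x) x :=
    fun x => (hf'.differentiable (by simp) x).hasDerivAt
  have hf'' : ContDiff ℝ (⊤ : ℕ∞) (deriv (deriv f)) := (contDiff_infty_iff_deriv.mp hf').2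
  -- v = log ∘ f and its derivatives
  set v : ℝ → ℝ := fun z => Real.log (f z) with hvdef
  set v1 : ℝ → ℝ := fun x => deriv f x / f x with hv1def
  set v2 : ℝ → ℝ := fun x =>
    (deriv (deriv f) x * f x - deriv f x * deriv f x) / f x ^ 2 with hv2def
  have hv1 : ∀ x, HasDerivAt v (v1 x) x := fun x => (hfd x).log (hne x)
  have hv2 : ∀ x, HasDerivAt v1 (v2 x) x := fun x => (hf'd x).div (hfd x) (hne x)
  have hdv : deriv v = v1 := funext fun x => (hv1 x).deriv
  have hiter2 : iteratedDeriv 2 v = v2 := by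
    rw [iteratedDeriv_succ, iteratedDeriv_one, hdv]
    exact funext fun x => (hv2 x).deriv
  have hv1C : ContDiff ℝ (⊤ : ℕ∞) v1 := hf'.div hf hne
  have hv2C : ContDiff ℝ (⊤ : ℕ∞) v2 :=
    ((hf''.mul hf).sub (hf'.mul hf')).div (hf.pow 2) fun x => pow_ne_zero 2 (hne x)
  rw [hiter2]
  -- w = f * v2
  set w : ℝ → ℝ := fun y => f y * v2 y with hwdef
  have hwC : ContDiff ℝ (⊤ : ℕ∞) w := hf.mul hv2C
  have hw1C : ContDiff ℝ (⊤ : ℕ∞) (deriv w) := (contDiff_infty_iff_deriv.mp hwC).2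
  have hw2C : ContDiff ℝ (⊤ : ℕ∞) (deriv (deriv w)) := (contDiff_infty_iff_deriv.mp hw1C).2
  have hwd : ∀ x, HasDerivAt w (deriv w x) x := fun x => (hwC.differentiable (by simp) x).hasDerivAt
  have hw1d : ∀ x, HasDerivAt (deriv w) (deriv (deriv w) x) x :=
    fun x => (hw1C.differentiable (by simp) x).hasDerivAt
  have hiterw : iteratedDeriv 2 w = deriv (deriv w) := by
    rw [iteratedDeriv_succ, iteratedDeriv_one]
  rw [hiterw]
  -- periodicity
  have Pf : Function.Periodic f L := hper
  have Pf' : Function.Periodic (deriv f) L := periodic_deriv'' Pf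
  have Pf'' : Function.Periodic (deriv (deriv f)) L := periodic_deriv'' Pf'
  have Pv1 : Function.Periodic v1 L := fun x => by simp only [hv1def, Pf x, Pf' x]
  have Pv2 : Function.Periodic v2 L := fun x => by
    simp only [hv2def, Pf x, Pf' x, Pf'' x]
  have Pw : Function.Periodic w L := fun x => by simp only [hwdef, Pf x, Pv2 x]
  have Pw1 : Function.Periodic (deriv w) L := periodic_deriv'' Pw
  have hL0 : (L : ℝ) = 0 + L := (zero_add L).symm
  have hw1LB : deriv w L = deriv w 0 := by rw [hL0]; exact Pw1 0
  -- p = 1/f and its derivatives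
  set p : ℝ → ℝ := fun x => (f x)⁻¹ with hpdef
  set p1 : ℝ → ℝ := fun x => -deriv f x / f x ^ 2 with hp1def
  have hp1 : ∀ x, HasDerivAt p (p1 x) x := fun x => (hfd x).inv (hne x)
  set p2 : ℝ → ℝ := fun x =>
    (-deriv (deriv f) x * f x ^ 2 - -deriv f x * ((2 : ℕ) * f x ^ (2 - 1) * deriv f x)) /
      (f x ^ 2) ^ 2 with hp2def
  have hp2 : ∀ x, HasDerivAt p1 (p2 x) x := fun x =>
    ((hf'd x).neg).div ((hfd x).pow 2) (pow_ne_zero 2 (hne x))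
  have Pp : Function.Periodic p L := fun x => by simp only [hpdef, Pf x]
  have Pp1 : Function.Periodic p1 L := fun x => by simp only [hp1def, Pf x, Pf' x]
  have hpLB : p L = p 0 := by rw [hL0]; exact Pp 0
  have hp1LB : p1 L = p1 0 := by rw [hL0]; exact Pp1 0
  have hwLB : w L = w 0 := by rw [hL0]; exact Pw 0
  -- continuity / integrability
  have hp1cont : Continuous p1 := by
    simp only [hp1def]
    exact (hf'.continuous.neg).div (hf.continuous.pow 2) fun x => pow_ne_zero 2 (hne x)
  have hp2cont : Continuous p2 := by
    simp only [hp2def]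
    have c1 : Continuous (deriv (deriv f)) := hf''.continuous
    have c2 : Continuous (deriv f) := hf'.continuous
    have c3 : Continuous f := hf.continuous
    apply Continuous.div
    · fun_prop
    · fun_prop
    · exact fun x => pow_ne_zero 2 (pow_ne_zero 2 (hne x))
  have iw1 : IntervalIntegrable (deriv w) MeasureTheory.volume 0 L :=
    hw1C.continuous.intervalIntegrable 0 L
  have iw2 : IntervalIntegrable (deriv (deriv w)) MeasureTheory.volume 0 L :=
    hw2C.continuous.intervalIntegrable 0 L
  have ip1 : IntervalIntegrable p1 MeasureTheory.volume 0 L := hp1cont.intervalIntegrable 0 L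
  have ip2 : IntervalIntegrable p2 MeasureTheory.volume 0 L := hp2cont.intervalIntegrable 0 L
  -- ∫ w'' = 0
  have int_w2 : ∫ x in (0:ℝ)..L, deriv (deriv w) x = 0 := by
    rw [integral_deriv_eq_sub (fun x _ => (hw1C.differentiable (by simp) x : DifferentiableAt ℝ (deriv w) x)) iw2, hw1LB, sub_self]
  -- first integration by parts
  have ibp1 : ∫ x in (0:ℝ)..L, p x * deriv (deriv w) x
      = - ∫ x in (0:ℝ)..L, p1 x * deriv w x := by
    rw [integral_mul_deriv_eq_deriv_mul (fun x _ => hp1 x) (fun x _ => hw1d x) ip1 iw2,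
      hpLB, hw1LB, sub_self, zero_sub]
  -- second integration by parts
  have ibp2 : ∫ x in (0:ℝ)..L, p1 x * deriv w x
      = - ∫ x in (0:ℝ)..L, p2 x * w x := by
    rw [integral_mul_deriv_eq_deriv_mul (fun x _ => hp2 x) (fun x _ => hwd x) ip2 iw1, hp1LB, hwLB, sub_self, zero_sub]
  -- pointwise identity p2 * w = -(v2)^2 + v1^2 * v2
  have hpt : ∀ x, p2 x * w x = -(v2 x) ^ 2 + v1 x ^ 2 * v2 x := by
    intro x
    have hfx := hne x
    simp only [hp2def, hwdef, hv2def, hv1def]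
    field_simp
    ring
  -- ∫ v1^2 * v2 = 0
  have int_cube : ∫ x in (0:ℝ)..L, v1 x ^ 2 * v2 x = 0 := by
    have hgd : ∀ x, HasDerivAt (fun y => v1 y ^ 3 / 3) (v1 x ^ 2 * v2 x) x := by
      intro x
      have h : HasDerivAt (fun y => v1 y ^ 3 / 3) _ x := ((hv2 x).fun_pow 3).div_const 3
      convert h using 1
      push_cast
      ring
    rw [integral_deriv_eq_sub' _ (funext fun x => (hgd x).deriv) (fun x _ => (hgd x).differentiableAt)
      (by exact ((hv1C.pow 2).mul hv2C).continuous.continuousOn)]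
    have : v1 L = v1 0 := by rw [hL0]; exact Pv1 0
    rw [this, sub_self]
  -- combine
  have expand : ∀ x, (1 - p x) * deriv (deriv w) x
      = deriv (deriv w) x - p x * deriv (deriv w) x := fun x => by ring
  calc ∫ x in (0:ℝ)..L, (1 - (f x)⁻¹) * deriv (deriv w) x
      = ∫ x in (0:ℝ)..L, (deriv (deriv w) x - p x * deriv (deriv w) x) := by
        refine intervalIntegral.integral_congr fun x _ => ?_
        simp only [hpdef]; ring
    _ = (∫ x in (0:ℝ)..L, deriv (deriv w) x) - ∫ x in (0:ℝ)..L, p x * deriv (deriv w) x := by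
        apply intervalIntegral.integral_sub iw2
        exact ((hf.continuous.inv₀ hne).mul hw2C.continuous).intervalIntegrable 0 L
    _ = - ∫ x in (0:ℝ)..L, p2 x * w x := by
        rw [int_w2, ibp1, ibp2]
        simp only [neg_neg, zero_sub]
    _ = - ∫ x in (0:ℝ)..L, (-(v2 x) ^ 2 + v1 x ^ 2 * v2 x) := by simp only [hpt]
    _ = - ((∫ x in (0:ℝ)..L, -(v2 x) ^ 2) + ∫ x in (0:ℝ)..L, v1 x ^ 2 * v2 x) := by
        rw [intervalIntegral.integral_add]
        · exact ((hv2C.pow 2).continuous.neg).intervalIntegrable 0 L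
        · exact ((hv1C.pow 2).mul hv2C).continuous.intervalIntegrable 0 L
    _ = ∫ x in (0:ℝ)..L, v2 x ^ 2 := by
        rw [int_cube, add_zero, intervalIntegral.integral_neg, neg_neg]


section Main

lemma dlss_key (L : ℝ) (hL : 0 < L) (u : ℝ → ℝ → ℝ)
    (hsmooth : ContDiff ℝ (⊤ : ℕ∞) (fun q : ℝ × ℝ => u q.1 q.2))
    (hper : ∀ x t : ℝ, 0 ≤ t → u (x + L) t = u x t)
    (hpos : ∀ x t : ℝ, 0 ≤ t → 0 < u x t)
    (heq : ∀ x t : ℝ, 0 ≤ t →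
      deriv (fun s => u x s) t
        + iteratedDeriv 2
            (fun y => u y t * iteratedDeriv 2 (fun z => Real.log (u z t)) y) x = 0)
    (t : ℝ) (ht : 0 ≤ t) :
    HasDerivAt (fun s => ∫ x in (0:ℝ)..L, (u x s - Real.log (u x s))) 
      (- ∫ x in (0:ℝ)..L, (iteratedDeriv 2 (fun z => Real.log (u z t)) x) ^ 2) t := by
  set U : ℝ × ℝ → ℝ := fun q => u q.1 q.2 with hUdef
  have hUc : Continuous U := hsmooth.continuous
  have hUd : Differentiable ℝ U := hsmooth.differentiable (by simp)
  set ut : ℝ × ℝ → ℝ := fun q => fderiv ℝ U q (0, 1) with hutdef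
  have hut_cont : Continuous ut := by
    have h1 : Continuous (fderiv ℝ U) := hsmooth.continuous_fderiv (by simp)
    exact h1.clm_apply continuous_const
  have hut_deriv : ∀ x s : ℝ, HasDerivAt (fun s' => u x s') (ut (x, s)) s := by
    intro x s
    have h1 : HasDerivAt (fun s' => ((x, s') : ℝ × ℝ)) (0, 1) s :=
      HasDerivAt.prodMk (hasDerivAt_const s x) (hasDerivAt_id s)
    exact ((hUd (x, s)).hasFDerivAt.comp_hasDerivAt s h1)
  -- positivity in a neighborhood
  have hS : IsOpen {q : ℝ × ℝ | 0 < U q} := isOpen_lt continuous_const hUc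
  have hK : IsCompact ((Icc (0:ℝ) L) ×ˢ ({t} : Set ℝ)) := isCompact_Icc.prod isCompact_singleton
  have hKS : (Icc (0:ℝ) L) ×ˢ ({t} : Set ℝ) ⊆ {q : ℝ × ℝ | 0 < U q} := by
    rintro ⟨x, s⟩ ⟨_, hs⟩
    simp only [mem_singleton_iff] at hs
    show 0 < u x s
    rw [hs]
    exact hpos x t ht
  obtain ⟨δ, hδ, hsub⟩ := hK.exists_thickening_subset_open hS hKS
  have hposloc : ∀ x ∈ Icc (0:ℝ) L, ∀ s : ℝ, |s - t| < δ → 0 < u x s := by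
    intro x hx s hs
    have : ((x, s) : ℝ × ℝ) ∈ Metric.thickening δ ((Icc (0:ℝ) L) ×ˢ ({t} : Set ℝ)) := by
      rw [Metric.mem_thickening_iff]
      refine ⟨(x, t), ⟨hx, rfl⟩, ?_⟩
      rw [Prod.dist_eq]
      simp only [dist_self, Real.dist_eq]
      calc max (0:ℝ) |s - t| = |s - t| := max_eq_right (abs_nonneg _)
        _ < δ := hs
    exact hsub this
  -- bound on compact set
  set ε : ℝ := δ / 2 with hεdef
  have hε : 0 < ε := by positivity
  set CC : Set (ℝ × ℝ) := (Icc (0:ℝ) L) ×ˢ (Icc (t - ε) (t + ε)) with hCCdef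
  have hCCc : IsCompact CC := isCompact_Icc.prod isCompact_Icc
  have hCCpos : ∀ q ∈ CC, 0 < U q := by
    rintro ⟨x, s⟩ ⟨hx, hs⟩
    apply hposloc x hx s
    rw [abs_sub_lt_iff]
    constructor
    · linarith [hs.2, hs.1]
    · linarith [hs.1, hs.2]
  set B : ℝ × ℝ → ℝ := fun q => ut q - ut q / U q with hBdef
  have hBcont : ContinuousOn B CC := by
    apply ContinuousOn.sub hut_cont.continuousOn
    exact ContinuousOn.div hut_cont.continuousOn hUc.continuousOn
      (fun q hq => (hCCpos q hq).ne')
  obtain ⟨C, hC⟩ := hCCc.exists_bound_of_continuousOn hBcont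
  -- apply differentiation under integral
  set F : ℝ → ℝ → ℝ := fun s x => u x s - Real.log (u x s) with hFdef
  set F' : ℝ → ℝ → ℝ := fun s x => ut (x, s) - ut (x, s) / u x s with hF'def
  have husub : uIoc (0:ℝ) L ⊆ Icc (0:ℝ) L := by
    rw [uIoc_of_le hL.le]
    exact Ioc_subset_Icc_self
  have key := intervalIntegral.hasDerivAt_integral_of_dominated_loc_of_deriv_le
    (F := F) (F' := F') (x₀ := t) (a := 0) (b := L) (μ := volume)
    (bound := fun _ => C) (Metric.ball_mem_nhds t hε)
    (by
      apply Filter.Eventually.of_forall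
      intro s
      have hcx : Continuous fun x => u x s := hUc.comp (continuous_id.prodMk continuous_const)
      exact (hcx.measurable.sub (Real.measurable_log.comp hcx.measurable)).aestronglyMeasurable)
    (by
      have hcx : Continuous fun x => u x t := hUc.comp (continuous_id.prodMk continuous_const)
      have : Continuous (F t) := by
        apply hcx.sub
        rw [continuous_iff_continuousAt]
        exact fun x => hcx.continuousAt.log (hpos x t ht).ne'
      exact this.intervalIntegrable 0 L)
    (by
      have : Continuous (F' t) := by
        have h1 : Continuous fun x => ut (x, t) :=
          hut_cont.comp (continuous_id.prodMk continuous_const)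
        have h2 : Continuous fun x => u x t := hUc.comp (continuous_id.prodMk continuous_const)
        exact h1.sub (h1.div h2 fun x => (hpos x t ht).ne')
      exact this.aestronglyMeasurable)
    (by
      apply Filter.Eventually.of_forall
      intro x hx s hs
      have hxI : x ∈ Icc (0:ℝ) L := husub hx
      have hsI : s ∈ Icc (t - ε) (t + ε) := by
        rw [Metric.mem_ball, Real.dist_eq, abs_sub_lt_iff] at hs
        constructor <;> [linarith [hs.2]; linarith [hs.1]]
      have := hC (x, s) ⟨hxI, hsI⟩
      simpa [hBdef, hF'def] using this)
    (intervalIntegrable_const)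
    (by
      apply Filter.Eventually.of_forall
      intro x hx s hs
      have hxI : x ∈ Icc (0:ℝ) L := husub hx
      have hus : 0 < u x s := by
        apply hposloc x hxI s
        rw [Metric.mem_ball, Real.dist_eq] at hs
        linarith [hs, hε, half_lt_self hδ]
      exact (hut_deriv x s).sub ((hut_deriv x s).log hus.ne'))
  have hFt : ∀ x : ℝ, F' t x
      = -((1 - (u x t)⁻¹) *
          iteratedDeriv 2 (fun y => u y t * iteratedDeriv 2 (fun z => Real.log (u z t)) y) x) := by
    intro x
    have h1 : ut (x, t) = deriv (fun s => u x s) t := ((hut_deriv x t).deriv).symm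
    have h2 := heq x t ht
    have h3 : ut (x, t)
        = -iteratedDeriv 2 (fun y => u y t * iteratedDeriv 2 (fun z => Real.log (u z t)) y) x := by
      rw [h1]; linarith
    show ut (x, t) - ut (x, t) / u x t = _
    rw [h3]
    have hne := (hpos x t ht).ne'
    field_simp
    ring
  have hfC : ContDiff ℝ (⊤ : ℕ∞) (fun x : ℝ => u x t) :=
    hsmooth.comp (contDiff_id.prodMk contDiff_const)
  have hsp := dlss_spatial L hL (fun x => u x t) hfC (fun x => hpos x t ht)
    (fun x => hper x t ht)
  beta_reduce at hsp
  have hInt : (∫ x in (0:ℝ)..L, F' t x)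
      = - ∫ x in (0:ℝ)..L, (iteratedDeriv 2 (fun z => Real.log (u z t)) x) ^ 2 := by
    simp only [hFt]
    rw [intervalIntegral.integral_neg, hsp]
  have h2 := key.2
  rw [hInt] at h2
  exact h2


/-- Second Lyapunov functional for the Derrida–Lebowitz–Speer–Spohn equation
`u_t + (u (log u)_xx)_xx = 0` on the circle of length `L`: for a smooth positive
solution `u` (here `u x t`, `L`-periodic in `x`), for all `t ≥ 0`
`d/dt ∫₀ᴸ (u − log u) dx = − ∫₀ᴸ ((log u)_xx)² dx`,
and in particular `t ↦ ∫₀ᴸ (u − log u) dx` is non-increasing on `[0, ∞)`. -/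
theorem second_lyapunov_dlss (L : ℝ) (hL : 0 < L) (u : ℝ → ℝ → ℝ)
    (hsmooth : ContDiff ℝ (⊤ : ℕ∞) (fun q : ℝ × ℝ => u q.1 q.2))
    (hper : ∀ x t : ℝ, 0 ≤ t → u (x + L) t = u x t)
    (hpos : ∀ x t : ℝ, 0 ≤ t → 0 < u x t)
    (heq : ∀ x t : ℝ, 0 ≤ t →
      deriv (fun s => u x s) t
        + iteratedDeriv 2
            (fun y => u y t * iteratedDeriv 2 (fun z => Real.log (u z t)) y) x = 0) :
    (∀ t : ℝ, 0 ≤ t →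
      deriv (fun s => ∫ x in (0:ℝ)..L, (u x s - Real.log (u x s))) t
        = - ∫ x in (0:ℝ)..L,
              (iteratedDeriv 2 (fun z => Real.log (u z t)) x) ^ 2) ∧
    AntitoneOn (fun t => ∫ x in (0:ℝ)..L, (u x t - Real.log (u x t)))
      (Set.Ici 0) := by
  have key : ∀ t : ℝ, 0 ≤ t →
      HasDerivAt (fun s => ∫ x in (0:ℝ)..L, (u x s - Real.log (u x s)))
        (- ∫ x in (0:ℝ)..L, (iteratedDeriv 2 (fun z => Real.log (u z t)) x) ^ 2) t :=
    fun t ht => dlss_key L hL u hsmooth hper hpos heq t ht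
  constructor
  · exact fun t ht => (key t ht).deriv
  · apply antitoneOn_of_deriv_nonpos (convex_Ici 0)
    · exact fun s hs => ((key s hs).continuousAt).continuousWithinAt
    · rw [interior_Ici]
      exact fun s hs => ((key s hs.le).differentiableAt).differentiableWithinAt
    · intro s hs
      rw [interior_Ici] at hs
      rw [(key s hs.le).deriv]
      exact neg_nonpos.mpr (intervalIntegral.integral_nonneg hL.le fun x _ => sq_nonneg _)

end Main
end

section
/- Uniqueness of positive classical solutions: let L > 0, T > 0, and let u₁, u₂ : ℝ × [0, T] → ℝ be smooth functions, L-periodic in x, with u₁ > 0 and u₂ > 0, both solving u_t + ( u (log u)_{xx} )_{xx} = 0 on ℝ × [0, T], and with the same initial data u₁(·, 0) = u₂(·, 0). Then u₁ = u₂ on ℝ × [0, T]. -/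
open Real MeasureTheory intervalIntegral Set

noncomputable def pdx (F : ℝ × ℝ → ℝ) : ℝ × ℝ → ℝ := fun q => fderiv ℝ F q (1, 0)
noncomputable def pdt (F : ℝ × ℝ → ℝ) : ℝ × ℝ → ℝ := fun q => fderiv ℝ F q (0, 1)

lemma contDiff_pdx {F : ℝ × ℝ → ℝ} (h : ContDiff ℝ (⊤ : ℕ∞) F) :
    ContDiff ℝ (⊤ : ℕ∞) (pdx F) :=
  (h.fderiv_right (by exact_mod_cast (by exact_mod_cast le_top))).clm_apply contDiff_const

lemma contDiff_pdt {F : ℝ × ℝ → ℝ} (h : ContDiff ℝ (⊤ : ℕ∞) F) :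
    ContDiff ℝ (⊤ : ℕ∞) (pdt F) :=
  (h.fderiv_right (by exact_mod_cast (by exact_mod_cast le_top))).clm_apply contDiff_const

lemma pdx_hasDerivAt {F : ℝ × ℝ → ℝ} (h : ContDiff ℝ (⊤ : ℕ∞) F) (x t : ℝ) :
    HasDerivAt (fun y => F (y, t)) (pdx F (x, t)) x := by
  have hF : HasFDerivAt F (fderiv ℝ F (x, t)) (x, t) :=
    (h.differentiable (by simp) (x, t)).hasFDerivAt
  have hl : HasDerivAt (fun y : ℝ => (y, t)) ((1 : ℝ), (0 : ℝ)) x :=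
    (hasDerivAt_id x).prodMk (hasDerivAt_const x t)
  exact hF.comp_hasDerivAt x hl

lemma pdt_hasDerivAt {F : ℝ × ℝ → ℝ} (h : ContDiff ℝ (⊤ : ℕ∞) F) (x t : ℝ) :
    HasDerivAt (fun s => F (x, s)) (pdt F (x, t)) t := by
  have hF : HasFDerivAt F (fderiv ℝ F (x, t)) (x, t) :=
    (h.differentiable (by simp) (x, t)).hasFDerivAt
  have hl : HasDerivAt (fun s : ℝ => (x, s)) ((0 : ℝ), (1 : ℝ)) t :=
    (hasDerivAt_const t x).prodMk (hasDerivAt_id t)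
  exact hF.comp_hasDerivAt t hl

lemma contDiff_section_x {F : ℝ × ℝ → ℝ} (h : ContDiff ℝ (⊤ : ℕ∞) F) (t : ℝ) :
    ContDiff ℝ (⊤ : ℕ∞) (fun x : ℝ => F (x, t)) :=
  h.comp (contDiff_id.prodMk contDiff_const)

lemma deriv_section_x {F : ℝ × ℝ → ℝ} (h : ContDiff ℝ (⊤ : ℕ∞) F) (t : ℝ) :
    deriv (fun x : ℝ => F (x, t)) = fun x => pdx F (x, t) :=
  funext fun x => (pdx_hasDerivAt h x t).deriv

lemma periodic_deriv' {f : ℝ → ℝ} {L : ℝ} (hf : Differentiable ℝ f)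
    (hp : ∀ x, f (x + L) = f x) (x : ℝ) : deriv f (x + L) = deriv f x := by
  have h1 : HasDerivAt (fun y => f (y + L)) (deriv f (x + L)) x := by
    exact ((hf (x + L)).hasDerivAt.comp x ((hasDerivAt_id x).add_const L)).congr_deriv (mul_one _)
  have h2 : HasDerivAt (fun y => f (y + L)) (deriv f x) x := by
    have : (fun y => f (y + L)) = f := funext hp
    rw [this]; exact (hf x).hasDerivAt
  exact h1.unique h2

/-- Integration by parts on the circle. -/
lemma ibp {L : ℝ} {f g : ℝ → ℝ} (hf : ContDiff ℝ (⊤ : ℕ∞) f) (hg : ContDiff ℝ (⊤ : ℕ∞) g)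
    (hfp : ∀ x, f (x + L) = f x) (hgp : ∀ x, g (x + L) = g x) :
    ∫ x in (0:ℝ)..L, f x * deriv g x = -∫ x in (0:ℝ)..L, deriv f x * g x := by
  have hdf : Continuous (deriv f) := (contDiff_infty_iff_deriv.mp (by exact_mod_cast hf)).2.continuous
  have hdg : Continuous (deriv g) := (contDiff_infty_iff_deriv.mp (by exact_mod_cast hg)).2.continuous
  have hderiv : deriv (fun x => f x * g x) = fun x => deriv f x * g x + f x * deriv g x :=
    funext fun x => (((hf.differentiable (by simp)) x).hasDerivAt.mul
      ((hg.differentiable (by simp) x).hasDerivAt)).deriv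
  have h0 : ∫ x in (0:ℝ)..L, (deriv f x * g x + f x * deriv g x) = 0 := by
    rw [integral_deriv_eq_sub' (fun x => f x * g x) hderiv
      (fun x _ => ((hf.differentiable (by simp) x).mul (hg.differentiable (by simp) x)))
      (((hdf.mul (hg.continuous)).add ((hf.continuous).mul hdg)).continuousOn)]
    have h1 : f L = f 0 := by simpa using hfp 0
    have h2 : g L = g 0 := by simpa using hgp 0
    rw [h1, h2]; ring
  rw [integral_add (f := fun x => deriv f x * g x) (g := fun x => f x * deriv g x)
    ((hdf.mul hg.continuous).intervalIntegrable _ _)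
    ((hf.continuous.mul hdg).intervalIntegrable _ _)] at h0
  linarith

lemma contDiff_deriv {f : ℝ → ℝ} (hf : ContDiff ℝ (⊤ : ℕ∞) f) :
    ContDiff ℝ (⊤ : ℕ∞) (deriv f) := by
  exact_mod_cast (contDiff_infty_iff_deriv.mp (by exact_mod_cast hf)).2

lemma qform {f : ℝ → ℝ} (hf : ContDiff ℝ (⊤ : ℕ∞) f) (hpos : ∀ x, 0 < f x) (x : ℝ) :
    f x * iteratedDeriv 2 (fun z => Real.log (f z)) x
      = deriv (deriv f) x - (deriv f x) ^ 2 / f x := by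
  have hdf : ContDiff ℝ (⊤ : ℕ∞) (deriv f) := contDiff_deriv hf
  have h1 : deriv (fun z => Real.log (f z)) = fun z => deriv f z / f z :=
    funext fun z => ((hf.differentiable (by simp) z).hasDerivAt.log
      (ne_of_gt (hpos z))).deriv
  have h2 : HasDerivAt (fun z => deriv f z / f z)
      ((deriv (deriv f) x * f x - deriv f x * deriv f x) / (f x) ^ 2) x :=
    ((hdf.differentiable (by simp) x).hasDerivAt).div
      ((hf.differentiable (by simp) x).hasDerivAt) (ne_of_gt (hpos x))
  have h3 : iteratedDeriv 2 (fun z => Real.log (f z)) x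
      = (deriv (deriv f) x * f x - deriv f x * deriv f x) / (f x) ^ 2 := by
    rw [iteratedDeriv_succ, iteratedDeriv_one, h1]
    exact h2.deriv
  rw [h3]
  have hfx := (hpos x).ne'
  field_simp

lemma pde_rewrite {u : ℝ → ℝ → ℝ} (hs : ContDiff ℝ (⊤ : ℕ∞) (fun q : ℝ × ℝ => u q.1 q.2))
    {t : ℝ} (hpos : ∀ x, 0 < u x t)
    (heq : ∀ x, deriv (fun s => u x s) t
      + iteratedDeriv 2
          (fun y => u y t * iteratedDeriv 2 (fun z => Real.log (u z t)) y) x = 0)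
    (x : ℝ) :
    pdt (fun q : ℝ × ℝ => u q.1 q.2) (x, t)
      = - deriv (deriv (fun y => deriv (deriv (fun z => u z t)) y
          - (deriv (fun z => u z t) y) ^ 2 / u y t)) x := by
  have hsec : ContDiff ℝ (⊤ : ℕ∞) (fun z => u z t) :=
    contDiff_section_x (F := fun q : ℝ × ℝ => u q.1 q.2) hs t
  have hfun : (fun y => u y t * iteratedDeriv 2 (fun z => Real.log (u z t)) y)
      = fun y => deriv (deriv (fun z => u z t)) y - (deriv (fun z => u z t) y) ^ 2 / u y t :=
    funext fun y => qform hsec hpos y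
  have h := heq x
  rw [hfun] at h
  have hder : deriv (fun s => u x s) t = pdt (fun q : ℝ × ℝ => u q.1 q.2) (x, t) :=
    (pdt_hasDerivAt (F := fun q : ℝ × ℝ => u q.1 q.2) hs x t).deriv
  rw [iteratedDeriv_succ, iteratedDeriv_one] at h
  rw [← hder]
  linarith

lemma key_est_1d {L : ℝ} (hL : 0 < L) (f g f1 g1 f2 g2 ft gt : ℝ → ℝ)
    (hf : ContDiff ℝ (⊤ : ℕ∞) f) (hg : ContDiff ℝ (⊤ : ℕ∞) g)
    (hf1 : deriv f = f1) (hg1 : deriv g = g1)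
    (hf2 : deriv f1 = f2) (hg2 : deriv g1 = g2)
    (hfp : ∀ x, f (x + L) = f x) (hgp : ∀ x, g (x + L) = g x)
    (hfpos : ∀ x, 0 < f x) (hgpos : ∀ x, 0 < g x)
    (hft : ∀ x, ft x = - deriv (deriv (fun y => f2 y - (f1 y) ^ 2 / f y)) x)
    (hgt : ∀ x, gt x = - deriv (deriv (fun y => g2 y - (g1 y) ^ 2 / g y)) x)
    (A B : ℝ)
    (hA : ∀ x ∈ Icc (0:ℝ) L, |((f2 x + g2 x) * f x - (f1 x + g1 x) * f1 x) / (f x) ^ 2| ≤ A)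
    (hB : ∀ x ∈ Icc (0:ℝ) L, |(g1 x) ^ 2 / (f x * g x)| ≤ B) :
    ∫ x in (0:ℝ)..L, 2 * (f x - g x) * (ft x - gt x)
      ≤ (A ^ 2 / 2 + B ^ 2) * ∫ x in (0:ℝ)..L, (f x - g x) ^ 2 := by
  -- basic smoothness
  have hTop : ((⊤ : ℕ∞) : WithTop ℕ∞) ≠ 0 := by simp
  have hf1C : ContDiff ℝ (⊤ : ℕ∞) f1 := hf1 ▸ contDiff_deriv hf
  have hg1C : ContDiff ℝ (⊤ : ℕ∞) g1 := hg1 ▸ contDiff_deriv hg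
  have hf2C : ContDiff ℝ (⊤ : ℕ∞) f2 := hf2 ▸ contDiff_deriv hf1C
  have hg2C : ContDiff ℝ (⊤ : ℕ∞) g2 := hg2 ▸ contDiff_deriv hg1C
  -- pointwise derivatives
  have hfd : ∀ x, HasDerivAt f (f1 x) x := fun x =>
    hf1 ▸ (hf.differentiable hTop x).hasDerivAt
  have hgd : ∀ x, HasDerivAt g (g1 x) x := fun x =>
    hg1 ▸ (hg.differentiable hTop x).hasDerivAt
  have hf1d : ∀ x, HasDerivAt f1 (f2 x) x := fun x =>
    hf2 ▸ (hf1C.differentiable hTop x).hasDerivAt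
  have hg1d : ∀ x, HasDerivAt g1 (g2 x) x := fun x =>
    hg2 ▸ (hg1C.differentiable hTop x).hasDerivAt
  -- periodicity of derivatives
  have hf1p : ∀ x, f1 (x + L) = f1 x := fun x => by
    rw [← hf1]; exact periodic_deriv' (hf.differentiable hTop) hfp x
  have hg1p : ∀ x, g1 (x + L) = g1 x := fun x => by
    rw [← hg1]; exact periodic_deriv' (hg.differentiable hTop) hgp x
  have hf2p : ∀ x, f2 (x + L) = f2 x := fun x => by
    rw [← hf2]; exact periodic_deriv' (hf1C.differentiable hTop) hf1p x
  have hg2p : ∀ x, g2 (x + L) = g2 x := fun x => by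
    rw [← hg2]; exact periodic_deriv' (hg1C.differentiable hTop) hg1p x
  -- the difference and its derivatives
  set w : ℝ → ℝ := fun x => f x - g x with hw_def
  set w1 : ℝ → ℝ := fun x => f1 x - g1 x with hw1_def
  set w2 : ℝ → ℝ := fun x => f2 x - g2 x with hw2_def
  have hwC : ContDiff ℝ (⊤ : ℕ∞) w := hf.sub hg
  have hw1C : ContDiff ℝ (⊤ : ℕ∞) w1 := hf1C.sub hg1C
  have hw2C : ContDiff ℝ (⊤ : ℕ∞) w2 := hf2C.sub hg2C
  have hwd : ∀ x, HasDerivAt w (w1 x) x := fun x => (hfd x).sub (hgd x)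
  have hw1d : ∀ x, HasDerivAt w1 (w2 x) x := fun x => (hf1d x).sub (hg1d x)
  have hwderiv : deriv w = w1 := funext fun x => (hwd x).deriv
  have hw1deriv : deriv w1 = w2 := funext fun x => (hw1d x).deriv
  have hwp : ∀ x, w (x + L) = w x := fun x => by simp only [hw_def, hfp, hgp]
  have hw1p : ∀ x, w1 (x + L) = w1 x := fun x => by simp only [hw1_def, hf1p, hg1p]
  -- the nonlinear fluxes
  set Qf : ℝ → ℝ := fun y => f2 y - (f1 y) ^ 2 / f y with hQf_def
  set Qg : ℝ → ℝ := fun y => g2 y - (g1 y) ^ 2 / g y with hQg_def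
  set H : ℝ → ℝ := fun y => Qf y - Qg y with hH_def
  have hQfC : ContDiff ℝ (⊤ : ℕ∞) Qf :=
    hf2C.sub ((hf1C.pow 2).div hf fun x => (hfpos x).ne')
  have hQgC : ContDiff ℝ (⊤ : ℕ∞) Qg :=
    hg2C.sub ((hg1C.pow 2).div hg fun x => (hgpos x).ne')
  have hHC : ContDiff ℝ (⊤ : ℕ∞) H := hQfC.sub hQgC
  have hQfp : ∀ x, Qf (x + L) = Qf x := fun x => by
    simp only [hQf_def, hf2p, hf1p, hfp]
  have hQgp : ∀ x, Qg (x + L) = Qg x := fun x => by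
    simp only [hQg_def, hg2p, hg1p, hgp]
  have hHp : ∀ x, H (x + L) = H x := fun x => by simp only [hH_def, hQfp, hQgp]
  -- second derivative of H
  have hdH : deriv H = fun x => deriv Qf x - deriv Qg x :=
    funext fun x => ((hQfC.differentiable hTop x).hasDerivAt.sub
      (hQgC.differentiable hTop x).hasDerivAt).deriv
  have hddH : deriv (deriv H) = fun x => deriv (deriv Qf) x - deriv (deriv Qg) x := by
    rw [hdH]
    exact funext fun x => (((contDiff_deriv hQfC).differentiable hTop x).hasDerivAt.sub
      ((contDiff_deriv hQgC).differentiable hTop x).hasDerivAt).deriv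
  -- rewrite time derivatives
  have hftgt : ∀ x, ft x - gt x = - deriv (deriv H) x := fun x => by
    rw [hft x, hgt x, hddH]; ring
  -- continuity toolbox
  have hcw : Continuous w := hwC.continuous
  have hcw1 : Continuous w1 := hw1C.continuous
  have hcw2 : Continuous w2 := hw2C.continuous
  have hcH : Continuous H := hHC.continuous
  -- the coefficient functions
  set a : ℝ → ℝ := fun x => (f1 x + g1 x) / f x with ha_def
  set b : ℝ → ℝ := fun x => -(g1 x) ^ 2 / (f x * g x) with hb_def
  have haC : ContDiff ℝ (⊤ : ℕ∞) a := (hf1C.add hg1C).div hf fun x => (hfpos x).ne'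
  have hbC : ContDiff ℝ (⊤ : ℕ∞) b :=
    ((hg1C.pow 2).neg).div (hf.mul hg) fun x => (mul_pos (hfpos x) (hgpos x)).ne'
  have hcb : Continuous b := hbC.continuous
  have hap : ∀ x, a (x + L) = a x := fun x => by simp only [ha_def, hf1p, hg1p, hfp]
  have hderiva : deriv a = fun x => ((f2 x + g2 x) * f x - (f1 x + g1 x) * f1 x) / (f x) ^ 2 :=
    funext fun x => (((hf1d x).add (hg1d x)).div (hfd x) (hfpos x).ne').deriv
  have hca' : Continuous (deriv a) := (contDiff_deriv haC).continuous
  -- pointwise decomposition of H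
  have hHdec : ∀ x, H x = w2 x - (a x * w1 x + b x * w x) := fun x => by
    simp only [hH_def, hQf_def, hQg_def, ha_def, hb_def, hw_def, hw1_def, hw2_def]
    have h1 := (hfpos x).ne'
    have h2 := (hgpos x).ne'
    field_simp
    ring
  have hwfg : ∀ x, w x = f x - g x := fun _ => rfl
  have hAa : ∀ x ∈ Icc (0:ℝ) L, |deriv a x| ≤ A := fun x hx => by
    rw [hderiva]; simpa using hA x hx
  have hbB : ∀ x ∈ Icc (0:ℝ) L, |b x| ≤ B := fun x hx => by
    simp only [hb_def, neg_div, abs_neg]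
    exact hB x hx
  clear_value w w1 w2 Qf Qg H a b
  clear hw_def hw1_def hw2_def hQf_def hQg_def hH_def ha_def hb_def hderiva
  -- integration by parts chain
  have hdHp : ∀ x, deriv H (x + L) = deriv H x :=
    periodic_deriv' (hHC.differentiable hTop) hHp
  have J1 : ∫ x in (0:ℝ)..L, w x * deriv (deriv H) x
      = - ∫ x in (0:ℝ)..L, w1 x * deriv H x := by
    have := ibp hwC (contDiff_deriv hHC) hwp hdHp
    rwa [hwderiv] at this
  have J2 : ∫ x in (0:ℝ)..L, w1 x * deriv H x = - ∫ x in (0:ℝ)..L, w2 x * H x := by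
    have := ibp hw1C hHC hw1p hHp
    rwa [hw1deriv] at this
  have J3 : ∫ x in (0:ℝ)..L, 2 * (f x - g x) * (ft x - gt x)
      = (-2) * ∫ x in (0:ℝ)..L, w2 x * H x := by
    rw [integral_congr (g := fun x => (-2) * (w x * deriv (deriv H) x))
      (fun x _ => by rw [hftgt x, ← hwfg x]; ring)]
    rw [intervalIntegral.integral_const_mul, J1, J2]
    ring
  -- split into three terms
  have hint1 : IntervalIntegrable (fun x => (-2 : ℝ) * (w2 x) ^ 2) volume 0 L :=
    (by fun_prop : Continuous fun x => (-2 : ℝ) * (w2 x) ^ 2).intervalIntegrable _ _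
  have hca : Continuous a := haC.continuous
  have hint2 : IntervalIntegrable (fun x => a x * (2 * (w1 x * w2 x))) volume 0 L :=
    (hca.mul (continuous_const.mul (hcw1.mul hcw2))).intervalIntegrable _ _
  have hint3 : IntervalIntegrable (fun x => 2 * (b x * (w x * w2 x))) volume 0 L :=
    (continuous_const.mul (hcb.mul (hcw.mul hcw2))).intervalIntegrable _ _
  have J4 : (-2) * ∫ x in (0:ℝ)..L, w2 x * H x
      = (∫ x in (0:ℝ)..L, (-2 : ℝ) * (w2 x) ^ 2)
        + ((∫ x in (0:ℝ)..L, a x * (2 * (w1 x * w2 x)))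
          + (∫ x in (0:ℝ)..L, 2 * (b x * (w x * w2 x)))) := by
    rw [← integral_add hint2 hint3, ← integral_add hint1 (hint2.add hint3),
      ← intervalIntegral.integral_const_mul]
    exact integral_congr fun x _ => by rw [hHdec x]; ring
  -- ibp for squares
  have K1 : ∫ x in (0:ℝ)..L, (w1 x) ^ 2 = - ∫ x in (0:ℝ)..L, w x * w2 x := by
    have h := ibp hwC hw1C hwp hw1p
    rw [hw1deriv, hwderiv] at h
    have e : ∫ x in (0:ℝ)..L, w1 x * w1 x = ∫ x in (0:ℝ)..L, (w1 x) ^ 2 :=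
      integral_congr fun x _ => by ring
    linarith
  have J5 : ∫ x in (0:ℝ)..L, a x * (2 * (w1 x * w2 x))
      = - ∫ x in (0:ℝ)..L, deriv a x * (w1 x) ^ 2 := by
    have hsq : deriv (fun x => (w1 x) ^ 2) = fun x => 2 * (w1 x * w2 x) :=
      funext fun x => by
        rw [((hw1d x).fun_pow 2).deriv]
        norm_num
        ring
    have h := ibp haC (hw1C.pow 2) hap (fun x => by simp only [hw1p])
    rwa [hsq] at h
  have hI2nn : 0 ≤ ∫ x in (0:ℝ)..L, (w2 x) ^ 2 :=
    integral_nonneg hL.le fun x _ => sq_nonneg _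
  -- bound the a-term
  have hbd1 : - ∫ x in (0:ℝ)..L, deriv a x * (w1 x) ^ 2
      ≤ A * ∫ x in (0:ℝ)..L, (w1 x) ^ 2 := by
    rw [← intervalIntegral.integral_const_mul, ← intervalIntegral.integral_neg]
    refine integral_mono_on hL.le
      (((hca'.mul (hcw1.pow 2)).neg).intervalIntegrable _ _)
      ((continuous_const.mul (hcw1.pow 2)).intervalIntegrable _ _) fun x hx => ?_
    have h2 : |deriv a x| ≤ A := hAa x hx
    nlinarith [sq_nonneg (w1 x), (abs_le.mp h2).1]
  have hbd2 : A * ∫ x in (0:ℝ)..L, (w1 x) ^ 2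
      ≤ A ^ 2 / 2 * (∫ x in (0:ℝ)..L, (w x) ^ 2)
        + 1 / 2 * ∫ x in (0:ℝ)..L, (w2 x) ^ 2 := by
    rw [K1]
    have step : (-A) * ∫ x in (0:ℝ)..L, w x * w2 x
        ≤ ∫ x in (0:ℝ)..L, (A ^ 2 / 2 * (w x) ^ 2 + 1 / 2 * (w2 x) ^ 2) := by
      rw [← intervalIntegral.integral_const_mul]
      refine integral_mono_on hL.le
        ((continuous_const.mul (hcw.mul hcw2)).intervalIntegrable _ _)
        (((continuous_const.mul (hcw.pow 2)).add
          (continuous_const.mul (hcw2.pow 2))).intervalIntegrable _ _) fun x hx => ?_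
      nlinarith [sq_nonneg (w2 x + A * w x)]
    have split : ∫ x in (0:ℝ)..L, (A ^ 2 / 2 * (w x) ^ 2 + 1 / 2 * (w2 x) ^ 2)
        = A ^ 2 / 2 * (∫ x in (0:ℝ)..L, (w x) ^ 2)
          + 1 / 2 * ∫ x in (0:ℝ)..L, (w2 x) ^ 2 := by
      rw [integral_add (f := fun x => A ^ 2 / 2 * (w x) ^ 2) (g := fun x => 1 / 2 * (w2 x) ^ 2)
        ((continuous_const.mul (hcw.pow 2)).intervalIntegrable _ _)
        ((continuous_const.mul (hcw2.pow 2)).intervalIntegrable _ _),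
        intervalIntegral.integral_const_mul, intervalIntegral.integral_const_mul]
    have e : A * -(∫ x in (0:ℝ)..L, w x * w2 x)
        = (-A) * ∫ x in (0:ℝ)..L, w x * w2 x := by ring
    rw [e]
    linarith
  -- bound the b-term
  have hbd3 : ∫ x in (0:ℝ)..L, 2 * (b x * (w x * w2 x))
      ≤ B ^ 2 * (∫ x in (0:ℝ)..L, (w x) ^ 2) + ∫ x in (0:ℝ)..L, (w2 x) ^ 2 := by
    have step : ∫ x in (0:ℝ)..L, 2 * (b x * (w x * w2 x))
        ≤ ∫ x in (0:ℝ)..L, (B ^ 2 * (w x) ^ 2 + (w2 x) ^ 2) := by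
      refine integral_mono_on hL.le hint3
        (((continuous_const.mul (hcw.pow 2)).add (hcw2.pow 2)).intervalIntegrable _ _)
        fun x hx => ?_
      have h1 : |b x| ≤ B := hbB x hx
      have hb2 : b x ^ 2 ≤ B ^ 2 := by nlinarith [sq_abs (b x), abs_nonneg (b x)]
      nlinarith [sq_nonneg (w2 x - b x * w x), sq_nonneg (w x)]
    have split : ∫ x in (0:ℝ)..L, (B ^ 2 * (w x) ^ 2 + (w2 x) ^ 2)
        = B ^ 2 * (∫ x in (0:ℝ)..L, (w x) ^ 2) + ∫ x in (0:ℝ)..L, (w2 x) ^ 2 := by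
      rw [integral_add (f := fun x => B ^ 2 * (w x) ^ 2) (g := fun x => (w2 x) ^ 2)
        ((continuous_const.mul (hcw.pow 2)).intervalIntegrable _ _)
        ((hcw2.pow 2).intervalIntegrable _ _), intervalIntegral.integral_const_mul]
    linarith
  -- final assembly
  have e1 : ∫ x in (0:ℝ)..L, (-2 : ℝ) * (w2 x) ^ 2
      = (-2) * ∫ x in (0:ℝ)..L, (w2 x) ^ 2 := intervalIntegral.integral_const_mul _ _
  have final : ∫ x in (0:ℝ)..L, 2 * (f x - g x) * (ft x - gt x)
      ≤ (A ^ 2 / 2 + B ^ 2) * ∫ x in (0:ℝ)..L, (w x) ^ 2 := by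
    rw [J3, J4, J5, e1]
    nlinarith [hbd1, hbd2, hbd3, hI2nn]
  have erw : ∫ x in (0:ℝ)..L, (f x - g x) ^ 2 = ∫ x in (0:ℝ)..L, (w x) ^ 2 :=
    integral_congr fun x _ => by rw [hwfg]
  rw [erw]
  exact final

lemma cont_section_x {u : ℝ → ℝ → ℝ}
    (h : Continuous (fun q : ℝ × ℝ => u q.1 q.2)) (t : ℝ) :
    Continuous (fun x : ℝ => u x t) :=
  h.comp (continuous_id.prodMk continuous_const)

/-- Uniqueness of positive classical solutions of the Derrida–Lebowitz–Speer–Spohn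
equation `u_t + (u (log u)_xx)_xx = 0` on the circle of length `L`: two smooth
positive solutions on the time interval `[0, T]` (here `u x t`, `L`-periodic in `x`)
with the same initial data coincide on `ℝ × [0, T]`. -/
theorem uniqueness_dlss (L : ℝ) (hL : 0 < L) (T : ℝ) (hT : 0 < T)
    (u₁ u₂ : ℝ → ℝ → ℝ)
    (hsmooth₁ : ContDiff ℝ (⊤ : ℕ∞) (fun q : ℝ × ℝ => u₁ q.1 q.2))
    (hsmooth₂ : ContDiff ℝ (⊤ : ℕ∞) (fun q : ℝ × ℝ => u₂ q.1 q.2))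
    (hper₁ : ∀ x t : ℝ, t ∈ Set.Icc 0 T → u₁ (x + L) t = u₁ x t)
    (hper₂ : ∀ x t : ℝ, t ∈ Set.Icc 0 T → u₂ (x + L) t = u₂ x t)
    (hpos₁ : ∀ x t : ℝ, t ∈ Set.Icc 0 T → 0 < u₁ x t)
    (hpos₂ : ∀ x t : ℝ, t ∈ Set.Icc 0 T → 0 < u₂ x t)
    (heq₁ : ∀ x t : ℝ, t ∈ Set.Icc 0 T →
      deriv (fun s => u₁ x s) t
        + iteratedDeriv 2
            (fun y => u₁ y t * iteratedDeriv 2 (fun z => Real.log (u₁ z t)) y) x = 0)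
    (heq₂ : ∀ x t : ℝ, t ∈ Set.Icc 0 T →
      deriv (fun s => u₂ x s) t
        + iteratedDeriv 2
            (fun y => u₂ y t * iteratedDeriv 2 (fun z => Real.log (u₂ z t)) y) x = 0)
    (hinit : ∀ x : ℝ, u₁ x 0 = u₂ x 0) :
    ∀ x t : ℝ, t ∈ Set.Icc 0 T → u₁ x t = u₂ x t := by
  -- continuity facts
  have hc1 : Continuous (fun q : ℝ × ℝ => u₁ q.1 q.2) := hsmooth₁.continuous
  have hc2 : Continuous (fun q : ℝ × ℝ => u₂ q.1 q.2) := hsmooth₂.continuous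
  have hct1 : Continuous (pdt (fun q : ℝ × ℝ => u₁ q.1 q.2)) :=
    (contDiff_pdt hsmooth₁).continuous
  have hct2 : Continuous (pdt (fun q : ℝ × ℝ => u₂ q.1 q.2)) :=
    (contDiff_pdt hsmooth₂).continuous
  -- the energy and its derivative
  set E : ℝ → ℝ := fun s => ∫ x in (0:ℝ)..L, (u₁ x s - u₂ x s) ^ 2 with hE_def
  set D : ℝ → ℝ := fun s => ∫ x in (0:ℝ)..L,
    2 * (u₁ x s - u₂ x s)
      * (pdt (fun q : ℝ × ℝ => u₁ q.1 q.2) (x, s)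
        - pdt (fun q : ℝ × ℝ => u₂ q.1 q.2) (x, s)) with hD_def
  have hE' : ∀ t₀ : ℝ, HasDerivAt E (D t₀) t₀ := by
    intro t₀
    have hKc : IsCompact ((Icc (0:ℝ) L) ×ˢ (Icc (t₀ - 1) (t₀ + 1))) :=
      isCompact_Icc.prod isCompact_Icc
    obtain ⟨M, hM⟩ := hKc.exists_bound_of_continuousOn
      (f := fun q : ℝ × ℝ => 2 * (u₁ q.1 q.2 - u₂ q.1 q.2)
        * (pdt (fun q : ℝ × ℝ => u₁ q.1 q.2) q - pdt (fun q : ℝ × ℝ => u₂ q.1 q.2) q))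
      ((continuous_const.mul ((hc1.sub hc2)) |>.mul (hct1.sub hct2)).continuousOn)
    have key := intervalIntegral.hasDerivAt_integral_of_dominated_loc_of_deriv_le
      (F := fun s x => (u₁ x s - u₂ x s) ^ 2)
      (F' := fun s x => 2 * (u₁ x s - u₂ x s)
        * (pdt (fun q : ℝ × ℝ => u₁ q.1 q.2) (x, s)
          - pdt (fun q : ℝ × ℝ => u₂ q.1 q.2) (x, s)))
      (x₀ := t₀) (a := (0:ℝ)) (b := L) (μ := volume) (bound := fun _ => M) (s := Metric.ball t₀ 1)
      (Metric.ball_mem_nhds t₀ one_pos) ?_ ?_ ?_ ?_ ?_ ?_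
    · exact key.2
    · exact Filter.Eventually.of_forall fun s =>
        (((cont_section_x hc1 s).sub (cont_section_x hc2 s)).pow 2).aestronglyMeasurable
    · exact ((((cont_section_x hc1 t₀).sub (cont_section_x hc2 t₀)).pow 2)).intervalIntegrable _ _
    · refine Continuous.aestronglyMeasurable ?_
      refine (continuous_const.mul ((cont_section_x hc1 t₀).sub (cont_section_x hc2 t₀))).mul ?_
      exact ((hct1.comp (continuous_id.prodMk continuous_const)).sub
        (hct2.comp (continuous_id.prodMk continuous_const)))
    · refine Filter.Eventually.of_forall fun x hx => fun s hs => ?_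
      refine hM (x, s) ⟨?_, ?_⟩
      · rw [uIoc_of_le hL.le] at hx; exact Ioc_subset_Icc_self hx
      · rw [Real.ball_eq_Ioo] at hs; exact Ioo_subset_Icc_self hs
    · exact intervalIntegrable_const
    · refine Filter.Eventually.of_forall fun x hx => fun s hs => ?_
      have h1 := pdt_hasDerivAt hsmooth₁ x s
      have h2 := pdt_hasDerivAt hsmooth₂ x s
      have h3 := (h1.fun_sub h2).fun_pow 2
      simpa using h3
  -- uniform bounds for the coefficient functions
  have hKc : IsCompact ((Icc (0:ℝ) L) ×ˢ (Icc (0:ℝ) T)) := isCompact_Icc.prod isCompact_Icc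
  have hcx1 : Continuous (pdx (fun q : ℝ × ℝ => u₁ q.1 q.2)) :=
    (contDiff_pdx hsmooth₁).continuous
  have hcx2 : Continuous (pdx (fun q : ℝ × ℝ => u₂ q.1 q.2)) :=
    (contDiff_pdx hsmooth₂).continuous
  have hcxx1 : Continuous (pdx (pdx (fun q : ℝ × ℝ => u₁ q.1 q.2))) :=
    (contDiff_pdx (contDiff_pdx hsmooth₁)).continuous
  have hcxx2 : Continuous (pdx (pdx (fun q : ℝ × ℝ => u₂ q.1 q.2))) :=
    (contDiff_pdx (contDiff_pdx hsmooth₂)).continuous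
  obtain ⟨A₀, hA₀⟩ := hKc.exists_bound_of_continuousOn
    (f := fun q : ℝ × ℝ =>
      ((pdx (pdx (fun q : ℝ × ℝ => u₁ q.1 q.2)) q + pdx (pdx (fun q : ℝ × ℝ => u₂ q.1 q.2)) q)
          * u₁ q.1 q.2
        - (pdx (fun q : ℝ × ℝ => u₁ q.1 q.2) q + pdx (fun q : ℝ × ℝ => u₂ q.1 q.2) q)
          * pdx (fun q : ℝ × ℝ => u₁ q.1 q.2) q) / (u₁ q.1 q.2) ^ 2)
    (ContinuousOn.div
      (((hcxx1.add hcxx2).mul hc1 |>.sub ((hcx1.add hcx2).mul hcx1)).continuousOn)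
      ((hc1.pow 2).continuousOn)
      (fun q hq => pow_ne_zero 2 (hpos₁ q.1 q.2 hq.2).ne'))
  obtain ⟨B₀, hB₀⟩ := hKc.exists_bound_of_continuousOn
    (f := fun q : ℝ × ℝ =>
      (pdx (fun q : ℝ × ℝ => u₂ q.1 q.2) q) ^ 2 / (u₁ q.1 q.2 * u₂ q.1 q.2))
    (ContinuousOn.div
      ((hcx2.pow 2).continuousOn)
      ((hc1.mul hc2).continuousOn)
      (fun q hq => (mul_pos (hpos₁ q.1 q.2 hq.2) (hpos₂ q.1 q.2 hq.2)).ne'))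
  set C : ℝ := A₀ ^ 2 / 2 + B₀ ^ 2 with hC_def
  -- the key differential inequality
  have key : ∀ t ∈ Icc (0:ℝ) T, D t ≤ C * E t := by
    intro t ht
    have hf1 : deriv (fun x => u₁ x t)
        = fun x => pdx (fun q : ℝ × ℝ => u₁ q.1 q.2) (x, t) :=
      deriv_section_x hsmooth₁ t
    have hg1 : deriv (fun x => u₂ x t)
        = fun x => pdx (fun q : ℝ × ℝ => u₂ q.1 q.2) (x, t) :=
      deriv_section_x hsmooth₂ t
    have hf2 : deriv (fun x => pdx (fun q : ℝ × ℝ => u₁ q.1 q.2) (x, t))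
        = fun x => pdx (pdx (fun q : ℝ × ℝ => u₁ q.1 q.2)) (x, t) :=
      deriv_section_x (contDiff_pdx hsmooth₁) t
    have hg2 : deriv (fun x => pdx (fun q : ℝ × ℝ => u₂ q.1 q.2) (x, t))
        = fun x => pdx (pdx (fun q : ℝ × ℝ => u₂ q.1 q.2)) (x, t) :=
      deriv_section_x (contDiff_pdx hsmooth₂) t
    have hft : ∀ x, pdt (fun q : ℝ × ℝ => u₁ q.1 q.2) (x, t)
        = - deriv (deriv (fun y =>
            pdx (pdx (fun q : ℝ × ℝ => u₁ q.1 q.2)) (y, t)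
              - (pdx (fun q : ℝ × ℝ => u₁ q.1 q.2) (y, t)) ^ 2 / u₁ y t)) x := by
      intro x
      rw [pde_rewrite hsmooth₁ (fun x => hpos₁ x t ht) (fun x => heq₁ x t ht) x, hf1, hf2]
    have hgt : ∀ x, pdt (fun q : ℝ × ℝ => u₂ q.1 q.2) (x, t)
        = - deriv (deriv (fun y =>
            pdx (pdx (fun q : ℝ × ℝ => u₂ q.1 q.2)) (y, t)
              - (pdx (fun q : ℝ × ℝ => u₂ q.1 q.2) (y, t)) ^ 2 / u₂ y t)) x := by
      intro x
      rw [pde_rewrite hsmooth₂ (fun x => hpos₂ x t ht) (fun x => heq₂ x t ht) x, hg1, hg2]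
    have hmain := key_est_1d hL (fun x => u₁ x t) (fun x => u₂ x t)
      (fun x => pdx (fun q : ℝ × ℝ => u₁ q.1 q.2) (x, t))
      (fun x => pdx (fun q : ℝ × ℝ => u₂ q.1 q.2) (x, t))
      (fun x => pdx (pdx (fun q : ℝ × ℝ => u₁ q.1 q.2)) (x, t))
      (fun x => pdx (pdx (fun q : ℝ × ℝ => u₂ q.1 q.2)) (x, t))
      (fun x => pdt (fun q : ℝ × ℝ => u₁ q.1 q.2) (x, t))
      (fun x => pdt (fun q : ℝ × ℝ => u₂ q.1 q.2) (x, t))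
      (contDiff_section_x hsmooth₁ t) (contDiff_section_x hsmooth₂ t)
      hf1 hg1 hf2 hg2
      (fun x => hper₁ x t ht) (fun x => hper₂ x t ht)
      (fun x => hpos₁ x t ht) (fun x => hpos₂ x t ht)
      hft hgt A₀ B₀
      (fun x hx => by
        have := hA₀ (x, t) ⟨hx, ht⟩
        rwa [Real.norm_eq_abs] at this)
      (fun x hx => by
        have := hB₀ (x, t) ⟨hx, ht⟩
        rwa [Real.norm_eq_abs] at this)
    exact hmain
  -- Gronwall: E vanishes on [0, T]
  have hEnn : ∀ s, 0 ≤ E s := fun s =>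
    integral_nonneg hL.le fun x _ => sq_nonneg _
  have hE0 : E 0 = 0 := by
    have : (fun x => (u₁ x 0 - u₂ x 0) ^ 2) = fun _ : ℝ => (0:ℝ) :=
      funext fun x => by rw [hinit x]; ring
    show (∫ x in (0:ℝ)..L, (u₁ x 0 - u₂ x 0) ^ 2) = 0
    rw [this]
    simp
  have hEzero : ∀ t ∈ Icc (0:ℝ) T, E t = 0 := by
    have hphi : ∀ s : ℝ, HasDerivAt (fun r => E r * Real.exp (-C * r))
        (D s * Real.exp (-C * s) + E s * (Real.exp (-C * s) * (-C))) s := fun s => by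
      have hexp : HasDerivAt (fun r : ℝ => Real.exp (-C * r)) (Real.exp (-C * s) * (-C)) s := by
        simpa using ((hasDerivAt_id s).const_mul (-C)).exp
      exact (hE' s).mul hexp
    have hdiff : Differentiable ℝ (fun r => E r * Real.exp (-C * r)) :=
      fun s => (hphi s).differentiableAt
    have hanti : AntitoneOn (fun r => E r * Real.exp (-C * r)) (Icc 0 T) := by
      apply antitoneOn_of_deriv_nonpos (convex_Icc 0 T) hdiff.continuous.continuousOn
        hdiff.differentiableOn
      intro s hs
      rw [interior_Icc] at hs
      rw [(hphi s).deriv]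
      have hDle := key s ⟨hs.1.le, hs.2.le⟩
      nlinarith [mul_nonneg (sub_nonneg.mpr hDle) (Real.exp_pos (-C * s)).le]
    intro t ht
    have h1 : E t * Real.exp (-C * t) ≤ E 0 * Real.exp (-C * 0) :=
      hanti ⟨le_refl 0, hT.le⟩ ht ht.1
    rw [hE0] at h1
    simp only [zero_mul] at h1
    nlinarith [hEnn t, Real.exp_pos (-C * t)]
  -- conclusion
  intro x t ht
  have hEt : (∫ y in (0:ℝ)..L, (u₁ y t - u₂ y t) ^ 2) = 0 := hEzero t ht
  have hv : Continuous fun y => u₁ y t - u₂ y t :=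
    (cont_section_x hc1 t).sub (cont_section_x hc2 t)
  have hae := (integral_eq_zero_iff_of_le_of_nonneg_ae hL.le
    (Filter.Eventually.of_forall fun y => sq_nonneg _)
    ((hv.pow 2).intervalIntegrable _ _)).mp hEt
  have hopen : IsOpen {y : ℝ | u₁ y t - u₂ y t ≠ 0} :=
    isOpen_compl_singleton.preimage hv
  have hnull : volume.restrict (Ioc 0 L) {y : ℝ | u₁ y t - u₂ y t ≠ 0} = 0 := by
    have h2 := hae
    rw [Filter.EventuallyEq, Filter.eventually_iff, mem_ae_iff] at h2
    have hset : {y : ℝ | u₁ y t - u₂ y t ≠ 0}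
        = {y : ℝ | (fun y => (u₁ y t - u₂ y t) ^ 2) y = (fun _ => (0:ℝ)) y}ᶜ := by
      ext y
      simp [pow_eq_zero_iff]
    rw [hset]
    exact h2
  have hnull2 : volume ({y : ℝ | u₁ y t - u₂ y t ≠ 0} ∩ Ioo 0 L) = 0 := by
    have hr := Measure.restrict_apply (μ := volume) (s := Ioc 0 L) hopen.measurableSet
    refine measure_mono_null (inter_subset_inter_right _ Ioo_subset_Ioc_self) ?_
    rw [hr] at hnull
    exact hnull
  have hempty := (hopen.inter isOpen_Ioo).eq_empty_of_measure_zero hnull2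
  have hIoo : ∀ y ∈ Ioo (0:ℝ) L, u₁ y t - u₂ y t = 0 := by
    intro y hy
    by_contra hne
    have hmem : y ∈ {y : ℝ | u₁ y t - u₂ y t ≠ 0} ∩ Ioo 0 L := ⟨hne, hy⟩
    rw [hempty] at hmem
    exact hmem
  have hIcc : ∀ y ∈ Icc (0:ℝ) L, u₁ y t - u₂ y t = 0 := by
    have hclosed : IsClosed {y : ℝ | u₁ y t - u₂ y t = 0} := isClosed_eq hv continuous_const
    intro y hy
    have h1 : Icc (0:ℝ) L ⊆ closure (Ioo 0 L) := by rw [closure_Ioo hL.ne]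
    have h2 : closure (Ioo (0:ℝ) L) ⊆ {y : ℝ | u₁ y t - u₂ y t = 0} := by
      rw [← hclosed.closure_eq]
      exact closure_mono hIoo
    exact h2 (h1 hy)
  have hper : Function.Periodic (fun y => u₁ y t - u₂ y t) L := fun y => by
    simp only [hper₁ y t ht, hper₂ y t ht]
  have hy' : x - (⌊x / L⌋ : ℤ) * L ∈ Icc (0:ℝ) L := by
    constructor
    · exact Int.sub_floor_div_mul_nonneg x hL
    · exact (Int.sub_floor_div_mul_lt x hL).le
  have h3 := hper.sub_int_mul_eq (x := x) ⌊x / L⌋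
  have h4 := hIcc _ hy'
  have h5 : u₁ x t - u₂ x t = 0 := by rw [← h3]; exact h4
  linarith
end
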